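/- arXiv:2307.09449 — 2 statements merged into one kernel-verified Lean document; each statement's English description precedes it below -/
import Mathlib

section
/- Let K be a field of characteristic not 2, let k ≥ 2, and let Q(X) = X_1 X_2 + ... + X_{2k-3} X_{2k-2} + R(X_{2k-1}, ..., X_n) be a quadratic form over K, where R is a quadratic form in the remaining variables. If Q vanishes on a K-linear subspace of dimension k, then R is isotropic over K (i.e., R has a nontrivial zero). -/
set_option maxHeartbeats 1000000
set_option synthInstance.maxHeartbeats 400000

open Matrix

open Module

lemma rank_map_helper {K : Type*} [Field K] {α β : Type*} [AddCommGroup α] [AddCommGroup β]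
    [Module K α] [Module K β] [FiniteDimensional K α]
    (π : α →ₗ[K] β) (W : Submodule K α) :
    finrank K (W.map π) + finrank K (LinearMap.ker (π.domRestrict W)) = finrank K W := by
  have := LinearMap.finrank_range_add_finrank_ker (π.domRestrict W)
  rwa [LinearMap.range_domRestrict] at this

lemma aux9 (K : Type*) [Field K] (M : ℕ) (R : (Fin M → K) → K) :
    ∀ m : ℕ, ∀ V : Submodule K (Fin (M + 2*m) → K),
      m + 1 ≤ finrank K V →
      (∀ v ∈ V, (∑ u : Fin m, v ⟨M + 2*u.val, by omega⟩ * v ⟨M + 2*u.val + 1, by omega⟩)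
          + R (fun i => v ⟨i.val, by omega⟩) = 0) →
      ∃ z, z ≠ 0 ∧ R z = 0 := by
  intro m
  induction m with
  | zero =>
    intro V hV hvan
    have hbot : V ≠ ⊥ := by
      intro h
      rw [h] at hV
      simp [finrank_bot] at hV
    obtain ⟨v, hvV, hv0⟩ := Submodule.exists_mem_ne_zero_of_ne_bot hbot
    refine ⟨fun i => v ⟨i.val, by omega⟩, ?_, ?_⟩
    · intro h
      apply hv0
      funext j
      have hj : j.val < M := by omega
      have := congrFun h ⟨j.val, hj⟩
      simpa using this
    · have := hvan v hvV
      simpa using this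
  | succ m ih =>
    intro V hV hvan
    set e : Fin (M + 2*(m+1)) → K := Pi.single ⟨M + 2*m + 1, by omega⟩ 1 with he
    set π : (Fin (M + 2*(m+1)) → K) →ₗ[K] (Fin (M + 2*m) → K) :=
      LinearMap.funLeft K K (fun i => ⟨i.val, by omega⟩) with hπ
    have hsplit : ∀ v : Fin (M + 2*(m+1)) → K,
        (∑ u : Fin (m+1), v ⟨M + 2*u.val, by omega⟩ * v ⟨M + 2*u.val + 1, by omega⟩)
        = (∑ u : Fin m, (π v) ⟨M + 2*u.val, by omega⟩ * (π v) ⟨M + 2*u.val + 1, by omega⟩)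
          + v ⟨M + 2*m, by omega⟩ * v ⟨M + 2*m + 1, by omega⟩ := by
      intro v
      rw [Fin.sum_univ_castSucc]
      congr 1
    have htail : ∀ v : Fin (M + 2*(m+1)) → K,
        (fun i : Fin M => v ⟨i.val, by omega⟩) = (fun i : Fin M => (π v) ⟨i.val, by omega⟩) := by
      intro v; rfl
    -- rewrite the vanishing hypothesis
    have hvan2 : ∀ v ∈ V,
        ((∑ u : Fin m, (π v) ⟨M + 2*u.val, by omega⟩ * (π v) ⟨M + 2*u.val + 1, by omega⟩)
          + R (fun i => (π v) ⟨i.val, by omega⟩))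
          + v ⟨M + 2*m, by omega⟩ * v ⟨M + 2*m + 1, by omega⟩ = 0 := by
      intro v hv
      have h1 := hvan v hv
      rw [hsplit, htail] at h1
      linear_combination h1
    -- the key vanishing for projected vectors with zero (M+2m) coordinate
    have hQ0 : ∀ v ∈ V, v ⟨M + 2*m, by omega⟩ = 0 →
        (∑ u : Fin m, (π v) ⟨M + 2*u.val, by omega⟩ * (π v) ⟨M + 2*u.val + 1, by omega⟩)
          + R (fun i => (π v) ⟨i.val, by omega⟩) = 0 := by
      intro v hv h0
      have := hvan2 v hv
      rw [h0] at this
      linear_combination this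
    -- if e ∈ V then every v ∈ V has zero (M+2m) coordinate
    have hve : e ∈ V → ∀ v ∈ V, v ⟨M + 2*m, by omega⟩ = 0 := by
      intro heV v hvV
      have h1 := hvan2 v hvV
      have h2 := hvan2 (v + e) (V.add_mem hvV heV)
      have hπve : π (v + e) = π v := by
        funext j
        show (v + e) _ = v _
        have : (⟨j.val, by omega⟩ : Fin (M + 2*(m+1))) ≠ ⟨M + 2*m + 1, by omega⟩ := by
          intro h
          have := Fin.mk.injEq .. ▸ h
          omega
        simp [he, Pi.single_apply, Fin.ext_iff]
        omega
      rw [hπve] at h2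
      have ha : (v + e) ⟨M + 2*m, by omega⟩ = v ⟨M + 2*m, by omega⟩ := by
        simp [he, Pi.single_apply, Fin.ext_iff]
      have hb : (v + e) ⟨M + 2*m + 1, by omega⟩ = v ⟨M + 2*m + 1, by omega⟩ + 1 := by
        simp [he, Pi.single_apply, Fin.ext_iff]
      rw [ha, hb] at h2
      linear_combination h2 - h1
    by_cases heV : e ∈ V
    · -- Case A : e ∈ V, project all of V
      have hkerle : ∀ x : LinearMap.ker (π.domRestrict V),
          (x : V).val ⟨M + 2*m + 1, by omega⟩ = 0 → x = 0 := by
        intro x hx1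
        have hπ0 : π ((x : V) : Fin (M + 2*(m+1)) → K) = 0 := x.property
        apply Subtype.ext; apply Subtype.ext; funext j
        show ((x : V) : Fin (M + 2*(m+1)) → K) j = 0
        by_cases hj : j.val < M + 2*m
        · have h := congrFun hπ0 ⟨j.val, hj⟩
          have hj' : (⟨j.val, by omega⟩ : Fin (M + 2*(m+1))) = j := Fin.ext rfl
          simpa [hπ, LinearMap.funLeft_apply, hj'] using h
        · by_cases hj2 : j.val = M + 2*m
          · have h := hve heV ((x : V) : Fin (M + 2*(m+1)) → K) (x : V).property
            have hj' : j = (⟨M + 2*m, by omega⟩ : Fin (M + 2*(m+1))) := Fin.ext hj2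
            rw [hj']; exact h
          · have hj3 : j.val = M + 2*m + 1 := by omega
            have hj' : j = (⟨M + 2*m + 1, by omega⟩ : Fin (M + 2*(m+1))) := Fin.ext hj3
            rw [hj']; exact hx1
      have hfinker : finrank K (LinearMap.ker (π.domRestrict V)) ≤ 1 := by
        have hinj : Function.Injective
            ((LinearMap.proj (⟨M + 2*m + 1, by omega⟩ : Fin (M + 2*(m+1))) :
                (Fin (M + 2*(m+1)) → K) →ₗ[K] K).comp
              (V.subtype.comp (LinearMap.ker (π.domRestrict V)).subtype)) := by
          intro x y hxy
          have h0 : ((((x - y) : LinearMap.ker (π.domRestrict V)) : V) :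
              Fin (M + 2*(m+1)) → K) ⟨M + 2*m + 1, by omega⟩ = 0 := by
            show (((x : V) : Fin (M + 2*(m+1)) → K)
              - ((y : V) : Fin (M + 2*(m+1)) → K)) ⟨M + 2*m + 1, by omega⟩ = 0
            rw [Pi.sub_apply]
            exact sub_eq_zero.mpr hxy
          exact sub_eq_zero.mp (hkerle (x - y) h0)
        calc finrank K (LinearMap.ker (π.domRestrict V)) ≤ finrank K K :=
              LinearMap.finrank_le_finrank_of_injective hinj
          _ = 1 := finrank_self K
      have hrank := rank_map_helper π V
      apply ih (V.map π) (by omega)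
      intro w hw
      obtain ⟨v, hv, rfl⟩ := hw
      exact hQ0 v hv (hve heV v hv)
    · -- Case B : e ∉ V, project U = V ∩ {x (M+2m) = 0}
      have hUrank : m + 1 ≤ finrank K
          (V ⊓ LinearMap.ker (LinearMap.proj (⟨M + 2*m, by omega⟩ : Fin (M + 2*(m+1))) :
            (Fin (M + 2*(m+1)) → K) →ₗ[K] K) : Submodule K (Fin (M + 2*(m+1)) → K)) := by
        set φ : (Fin (M + 2*(m+1)) → K) →ₗ[K] K :=
          LinearMap.proj (⟨M + 2*m, by omega⟩ : Fin (M + 2*(m+1))) with hφ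
        have h1 := LinearMap.finrank_range_add_finrank_ker (φ.comp V.subtype)
        have h2 : finrank K (LinearMap.range (φ.comp V.subtype)) ≤ 1 := by
          calc finrank K (LinearMap.range (φ.comp V.subtype)) ≤ finrank K K :=
                Submodule.finrank_le _
            _ = 1 := finrank_self K
        have h3 : finrank K (LinearMap.ker (φ.comp V.subtype))
            = finrank K (V ⊓ LinearMap.ker φ : Submodule K (Fin (M + 2*(m+1)) → K)) := by
          rw [LinearMap.ker_comp, ← Submodule.finrank_map_subtype_eq,
            Submodule.map_comap_subtype]
        omega
      set U : Submodule K (Fin (M + 2*(m+1)) → K) :=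
        V ⊓ LinearMap.ker (LinearMap.proj (⟨M + 2*m, by omega⟩ : Fin (M + 2*(m+1))) :
          (Fin (M + 2*(m+1)) → K) →ₗ[K] K) with hU
      have hkerbot : LinearMap.ker (π.domRestrict U) = ⊥ := by
        rw [LinearMap.ker_eq_bot']
        intro x hx
        have hπ0 : π ((x : Fin (M + 2*(m+1)) → K)) = 0 := hx
        have hxV : (x : Fin (M + 2*(m+1)) → K) ∈ V := x.property.1
        have hx0 : (x : Fin (M + 2*(m+1)) → K) ⟨M + 2*m, by omega⟩ = 0 := x.property.2
        set c : K := (x : Fin (M + 2*(m+1)) → K) ⟨M + 2*m + 1, by omega⟩ with hc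
        have hxe : (x : Fin (M + 2*(m+1)) → K) = c • e := by
          funext j
          by_cases hj : j.val < M + 2*m
          · have h := congrFun hπ0 ⟨j.val, hj⟩
            have hj' : (⟨j.val, by omega⟩ : Fin (M + 2*(m+1))) = j := Fin.ext rfl
            simp only [hπ, LinearMap.funLeft_apply, hj'] at h
            rw [h]
            have hej : e j = 0 := by
              rw [he, Pi.single_apply, if_neg]
              simp only [Fin.ext_iff]
              omega
            simp [hej]
          · by_cases hj2 : j.val = M + 2*m
            · have hj' : j = (⟨M + 2*m, by omega⟩ : Fin (M + 2*(m+1))) := Fin.ext hj2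
              rw [hj', hx0]
              have hej : e ⟨M + 2*m, by omega⟩ = 0 := by
                rw [he, Pi.single_apply, if_neg]
                simp only [Fin.ext_iff]
                omega
              simp [hej]
            · have hj3 : j.val = M + 2*m + 1 := by omega
              have hj' : j = (⟨M + 2*m + 1, by omega⟩ : Fin (M + 2*(m+1))) := Fin.ext hj3
              rw [hj']
              simp [he, Pi.single_apply, hc]
        by_cases hcz : c = 0
        · apply Subtype.ext
          rw [hxe, hcz, zero_smul]
          rfl
        · exfalso
          apply heV
          have : e = c⁻¹ • ((x : Fin (M + 2*(m+1)) → K)) := by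
            rw [hxe, smul_smul, inv_mul_cancel₀ hcz, one_smul]
          rw [this]
          exact V.smul_mem _ hxV
      have hrank := rank_map_helper π U
      rw [hkerbot] at hrank
      simp only [finrank_bot, add_zero] at hrank
      apply ih (U.map π) (by omega)
      intro w hw
      obtain ⟨v, hv, rfl⟩ := hw
      exact hQ0 v hv.1 hv.2

/-- Let `K` have characteristic `≠ 2`, `k ≥ 2`, and let
`Q(X) = X₁X₂ + ⋯ + X_{2k-3}X_{2k-2} + R(X_{2k-1}, …, Xₙ)`.  If `Q` vanishes on a
`K`-linear subspace of dimension `k`, then `R` is isotropic over `K`. -/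
theorem stmt9 (K : Type*) [Field K] (h2 : (2 : K) ≠ 0) (k n : ℕ) (hk : 2 ≤ k)
    (hn : 2 * k - 2 ≤ n)
    (N : Matrix (Fin (n - (2 * k - 2))) (Fin (n - (2 * k - 2))) K)
    (Q : (Fin n → K) → K)
    (hQ : ∀ x, Q x =
      (∑ u : Fin (k - 1), x ⟨2 * u.val, by omega⟩ * x ⟨2 * u.val + 1, by omega⟩) +
        (fun z : Fin (n - (2 * k - 2)) → K => z ⬝ᵥ N *ᵥ z)
          (fun i => x ⟨2 * k - 2 + i.val, by omega⟩))
    (V : Submodule K (Fin n → K)) (hV : Module.finrank K V = k)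
    (hvan : ∀ v ∈ V, Q v = 0) :
    ∃ z : Fin (n - (2 * k - 2)) → K, z ≠ 0 ∧ z ⬝ᵥ N *ᵥ z = 0 := by
  -- reindexing map
  set σ : Fin ((n - (2*k - 2)) + 2*(k-1)) → Fin n := fun i =>
    if h : i.val < n - (2*k - 2) then ⟨2*k - 2 + i.val, by omega⟩ else ⟨i.val - (n - (2*k - 2)), by omega⟩ with hσ
  have hA : ∀ (i : Fin ((n - (2*k - 2)) + 2*(k-1))) (h : i.val < n - (2*k - 2)),
      σ i = ⟨2*k - 2 + i.val, by omega⟩ := fun i h => dif_pos h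
  have hB : ∀ (i : Fin ((n - (2*k - 2)) + 2*(k-1))) (h : ¬ i.val < n - (2*k - 2)),
      σ i = ⟨i.val - (n - (2*k - 2)), by omega⟩ := fun i h => dif_neg h
  have hσsurj : Function.Surjective σ := by
    intro j
    by_cases hj : j.val < 2*k - 2
    · refine ⟨⟨(n - (2*k - 2)) + j.val, by omega⟩, ?_⟩
      rw [hB _ (by simp)]
      apply Fin.ext
      simp
    · refine ⟨⟨j.val - (2*k - 2), by omega⟩, ?_⟩
      rw [hA _ (by simp; omega)]
      apply Fin.ext
      simp
      omega
  set π : (Fin n → K) →ₗ[K] (Fin ((n - (2*k - 2)) + 2*(k-1)) → K) := LinearMap.funLeft K K σ with hπ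
  have hπinj : Function.Injective π := LinearMap.funLeft_injective_of_surjective K K σ hσsurj
  set W : Submodule K (Fin ((n - (2*k - 2)) + 2*(k-1)) → K) := V.map π with hW
  have hWrank : finrank K W = k := by
    have h1 := rank_map_helper π V
    have h2 : LinearMap.ker (π.domRestrict V) = ⊥ := by
      rw [LinearMap.ker_eq_bot']
      intro x hx
      apply Subtype.ext
      rw [ZeroMemClass.coe_zero]
      apply hπinj
      rw [map_zero]
      exact hx
    rw [h2] at h1
    simp only [finrank_bot, add_zero] at h1
    rw [h1, hV]
  have hWvan : ∀ w ∈ W,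
      (∑ u : Fin (k-1), w ⟨(n - (2*k - 2)) + 2*u.val, by omega⟩ * w ⟨(n - (2*k - 2)) + 2*u.val + 1, by omega⟩)
        + (fun z : Fin (n - (2*k - 2)) → K => z ⬝ᵥ N *ᵥ z) (fun i => w ⟨i.val, by omega⟩) = 0 := by
    intro w hw
    obtain ⟨v, hv, rfl⟩ := hw
    have hc1 : ∀ u : Fin (k-1),
        (π v) ⟨(n - (2*k - 2)) + 2*u.val, by omega⟩ = v ⟨2*u.val, by omega⟩ := by
      intro u
      show v (σ ⟨(n - (2*k - 2)) + 2*u.val, by omega⟩) = _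
      rw [hB _ (by simp)]
      congr 1
      apply Fin.ext
      simp
    have hc2 : ∀ u : Fin (k-1),
        (π v) ⟨(n - (2*k - 2)) + 2*u.val + 1, by omega⟩ = v ⟨2*u.val + 1, by omega⟩ := by
      intro u
      show v (σ ⟨(n - (2*k - 2)) + 2*u.val + 1, by omega⟩) = _
      rw [hB _ (by simp; omega)]
      congr 1
      apply Fin.ext
      simp
      omega
    have hc3 : (fun i : Fin (n - (2*k - 2)) => (π v) ⟨i.val, by omega⟩)
        = (fun i : Fin (n - (2*k - 2)) => v ⟨2*k - 2 + i.val, by omega⟩) := by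
      funext i
      show v (σ ⟨i.val, by omega⟩) = _
      rw [hA _ (by simpa using i.isLt)]
    have hq := hvan v hv
    rw [hQ v] at hq
    simp only [hc1, hc2, hc3]
    convert hq using 2
  obtain ⟨z, hz0, hzR⟩ := aux9 K (n - (2*k - 2)) (fun z : Fin (n - (2*k - 2)) → K => z ⬝ᵥ N *ᵥ z) (k-1) W
    (by omega) hWvan
  exact ⟨z, hz0, hzR⟩
end

section
/- Let a_1, a_2 be units in ℤ_p, let d be a positive integer with d ≡ a_1 a_2 (mod m_p), where m_p = p for odd p and m_2 = 8, and suppose −d is not a square in ℚ_p. Then the binary quadratic form a_1 X_1² + a_2 X_2² is isotropic over the field ℚ_p(√−d). -/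
/-!
Hensel's lemma for `X² - a₁a₂d` at the unit `a₁a₂`, where the value is `a₁a₂(a₁a₂ - d)` and the
derivative `2a₁a₂`, makes `a₁a₂d` a square `z²` in `ℤ_p`: the modulus `m_p` is chosen so that
`‖d - a₁a₂‖ ≤ ‖m_p‖ < ‖2‖²`. With `s² = -d`, the pair `(a₂s, z)` is a nontrivial zero of
`a₁X₁² + a₂X₂²`, since `a₁(a₂s)² + a₂z² = a₁a₂²(-d) + a₂ · a₁a₂d = 0`.
-/

open Polynomial

namespace PadicInt

variable {p : ℕ} [Fact p.Prime]

theorem isSquare_mul_of_norm_sub_lt {u c : ℤ_[p]} (hu : IsUnit u)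
    (h : ‖c - u‖ < ‖(2 : ℤ_[p])‖ ^ 2) : IsSquare (u * c) := by
  have hu1 : ‖u‖ = 1 := isUnit_iff.mp hu
  have heval : (X ^ 2 - C (u * c)).aeval u = -(u * (c - u)) := by
    simp only [aeval_sub, aeval_X_pow, aeval_C, Algebra.algebraMap_self, RingHom.id_apply]
    ring
  have hderiv : (X ^ 2 - C (u * c)).derivative.aeval u = 2 * u := by
    rw [derivative_sub, derivative_X_sq, derivative_C, sub_zero, map_mul, aeval_C, aeval_X]
    rfl
  have hnorm :
      ‖(X ^ 2 - C (u * c)).aeval u‖ < ‖(X ^ 2 - C (u * c)).derivative.aeval u‖ ^ 2 := by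
    rwa [heval, hderiv, norm_neg, norm_mul, norm_mul, hu1, one_mul, mul_one]
  obtain ⟨z, hz, -⟩ := hensels_lemma hnorm
  exact ⟨z, by simpa [sub_eq_zero, sq, eq_comm] using hz⟩

theorem norm_two_of_ne_two (hp : p ≠ 2) : ‖(2 : ℤ_[p])‖ = 1 := by
  exact_mod_cast norm_natCast_eq_one_iff.mpr
    (Nat.coprime_two_right.mpr ((Fact.out : p.Prime).odd_of_ne_two hp))

/-- The modulus `m_p` of the paper. -/
def squareModulus (p : ℕ) : ℕ := if p = 2 then 8 else p

theorem norm_squareModulus_lt : ‖(squareModulus p : ℤ_[p])‖ < ‖(2 : ℤ_[p])‖ ^ 2 := by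
  unfold squareModulus
  split_ifs with hp
  · subst hp
    have h2 : ‖(2 : ℤ_[2])‖ = 2⁻¹ := by exact_mod_cast norm_p (p := 2)
    rw [show ((8 : ℕ) : ℤ_[2]) = 2 ^ 3 by norm_num, norm_pow, h2]
    norm_num
  · rw [norm_p, norm_two_of_ne_two hp, one_pow]
    exact inv_lt_one_of_one_lt₀ (mod_cast (Fact.out : p.Prime).one_lt)

theorem isSquare_mul_of_squareModulus_dvd_sub {u c : ℤ_[p]} (hu : IsUnit u)
    (h : (squareModulus p : ℤ_[p]) ∣ c - u) : IsSquare (u * c) := by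
  refine isSquare_mul_of_norm_sub_lt hu (lt_of_le_of_lt ?_ norm_squareModulus_lt)
  obtain ⟨k, hk⟩ := h
  rw [hk, norm_mul]
  exact mul_le_of_le_one_right (norm_nonneg _) (norm_le_one k)

end PadicInt

theorem exists_isotropic_of_sq_eq {R : Type*} [CommRing R] {a b t s z : R}
    (hz : z ^ 2 = a * b * t) (hne : a * b * t ≠ 0) (hs : s ^ 2 = -t) :
    ∃ x y : R, ¬ (x = 0 ∧ y = 0) ∧ a * x ^ 2 + b * y ^ 2 = 0 :=
  ⟨b * s, z, fun ⟨_, hz0⟩ => hne (by rw [← hz, hz0, zero_pow two_ne_zero]), by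
    linear_combination b * hz + a * b ^ 2 * hs⟩

theorem stmt12_general (p : ℕ) [Fact p.Prime] (a₁ a₂ : ℤ_[p])
    (h₁ : IsUnit a₁) (h₂ : IsUnit a₂) (d : ℕ) (hd : 0 < d)
    (hcong : (((if p = 2 then 8 else p : ℕ)) : ℤ_[p]) ∣ ((d : ℤ_[p]) - a₁ * a₂))
    (L : Type*) [Field L] [Algebra ℚ_[p] L] (s : L) (hs : s ^ 2 = -(d : L)) :
    ∃ x y : L, ¬ (x = 0 ∧ y = 0) ∧
      algebraMap ℚ_[p] L (a₁ : ℚ_[p]) * x ^ 2 +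
        algebraMap ℚ_[p] L (a₂ : ℚ_[p]) * y ^ 2 = 0 := by
  obtain ⟨z, hz⟩ := PadicInt.isSquare_mul_of_squareModulus_dvd_sub (h₁.mul h₂) hcong
  let f : ℤ_[p] →+* L := (algebraMap ℚ_[p] L).comp PadicInt.Coe.ringHom
  have hf : Function.Injective f :=
    (algebraMap ℚ_[p] L).injective.comp Subtype.val_injective
  have hne : a₁ * a₂ * d ≠ 0 :=
    mul_ne_zero (mul_ne_zero h₁.ne_zero h₂.ne_zero) (Nat.cast_ne_zero.mpr hd.ne')
  refine exists_isotropic_of_sq_eq (a := f a₁) (b := f a₂) (t := d) (z := f z) ?_ ?_ hs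
  · rw [← map_natCast f, ← map_mul, ← map_mul, ← map_pow, sq, hz]
  · rw [← map_natCast f, ← map_mul, ← map_mul]
    exact (map_ne_zero_iff f hf).mpr hne

/-- Let `a₁, a₂` be units of `ℤ_p`, let `d ∈ ℕ`, `d > 0`, with
`d ≡ a₁a₂ (mod m_p)` where `m_p = p` for odd `p` and `m_2 = 8`, and suppose `−d`
is not a square in `ℚ_p`.  Then `a₁X₁² + a₂X₂²` is isotropic over `ℚ_p(√−d)`
(formalized: over any field `L ⊇ ℚ_p` containing a square root of `−d`). -/
theorem stmt12 (p : ℕ) [Fact p.Prime] (a₁ a₂ : ℤ_[p])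
    (h₁ : IsUnit a₁) (h₂ : IsUnit a₂) (d : ℕ) (hd : 0 < d)
    (hcong : (((if p = 2 then 8 else p : ℕ)) : ℤ_[p]) ∣ ((d : ℤ_[p]) - a₁ * a₂))
    (hns : ¬ IsSquare (-(d : ℚ_[p])))
    (L : Type*) [Field L] [Algebra ℚ_[p] L] (s : L) (hs : s ^ 2 = -(d : L)) :
    ∃ x y : L, ¬ (x = 0 ∧ y = 0) ∧
      algebraMap ℚ_[p] L (a₁ : ℚ_[p]) * x ^ 2 +
        algebraMap ℚ_[p] L (a₂ : ℚ_[p]) * y ^ 2 = 0 :=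
  stmt12_general p a₁ a₂ h₁ h₂ d hd hcong L s hs
end
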